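/- Proposition 5.7 (master inequality for deterministic PDG): Run the PDG iteration with parameters τ_t, η_t, α_t ≥ 0 and weights θ_t ≥ 0 (t = 1, …, k) satisfying θ_t·τ_t ≤ θ_{t−1}(1 + τ_{t−1}) and θ_t·η_t ≤ θ_{t−1}(μ + η_{t−1}) for t = 2, …, k, η_{t−1}·τ_t ≥ 2L_f·α_t for t = 2, …, k, η_k(1 + τ_k) ≥ 2L_f, and α_t = θ_{t−1}/θ_t for t = 2, …, k. Let z̄^k = (x̄^k, ḡ^k) = (Σ_{t=1}^k θ_t)^{-1} Σ_{t=1}^k θ_t(x^t, g^t) and D_f(g^0, g) := J_f(g) − J_f(g^0) − ⟨x^0, g − g^0⟩. Then for every k ≥ 1, every x ∈ X, and every g with J_f(g) < +∞: (Σ_{t=1}^k θ_t)·Q_f(z̄^k, (x, g)) + θ_k(μ + η_k)·P(x^k, x) ≤ θ_1·η_1·P(x^0, x) + θ_1·τ_1·D_f(g^0, g). -/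

import Mathlib

/-!
Each PDG step is a primal prox step followed by a dual prox step. The three-point inequality of
the primal prox step in the Bregman distance `P` of `ω` controls the primal part of
`Q_f((x^t, g^t), (x, g))`. The dual step `g^t = ∇f(x̲^t)` is a prox step on `J_f` in the Bregman
distance `D_f` of `J_f`: since `x̲^t ∈ ∂J_f(g^t)` and `(1 + τ_t) x̲^t = x̃^t + τ_t x̲^{t-1}`, it
satisfies an exact three-point identity. What remains is the cross term
`α_t ⟨x^{t-1} - x^{t-2}, g^t - g^{t-1}⟩`, which Young's inequality absorbs into
`η_{t-1} P(x^{t-2}, x^{t-1}) ≥ η_{t-1} ‖x^{t-1} - x^{t-2}‖² / 4` and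
`τ_t D_f(g^{t-1}, g^t) ≥ τ_t ‖g^t - g^{t-1}‖² / (2 L_f)` (strong monotonicity of `∇ω` and
`L_f`-smoothness of `f`), precisely when `η_{t-1} τ_t ≥ 2 L_f α_t`. After weighting by `θ_t` the
conditions on `θ` make the sum telescope, and `η_k (1 + τ_k) ≥ 2 L_f` absorbs the last cross term.
Finally `Q_f` is convex in its first argument, so Jensen's inequality passes to the average `z̄^k`.
-/

open scoped RealInnerProductSpace
open Set

theorem sub_le_add_half_of_hasDerivAt {φ φ' : ℝ → ℝ} {c : ℝ}
    (hφ : ∀ t, HasDerivAt φ (φ' t) t) (hc : ∀ t ∈ Ioo (0 : ℝ) 1, φ' t - φ' 0 ≤ c * t) :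
    φ 1 - φ 0 ≤ φ' 0 + c / 2 := by
  set r : ℝ → ℝ := fun t => φ t - t * φ' 0 - c * t ^ 2 / 2
  have hr : ∀ t, HasDerivAt r (φ' t - φ' 0 - c * t) t := fun t =>
    (((hφ t).sub ((hasDerivAt_id' t).mul_const (φ' 0))).sub
      (((hasDerivAt_pow 2 t).const_mul c).div_const 2)).congr_deriv (by push_cast; ring)
  have hanti : AntitoneOn r (Icc 0 1) :=
    antitoneOn_of_hasDerivWithinAt_nonpos (convex_Icc 0 1)
      (fun t _ => (hr t).continuousAt.continuousWithinAt) (fun t _ => (hr t).hasDerivWithinAt)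
      (fun t ht => by rw [interior_Icc] at ht; linarith [hc t ht])
  have := hanti (left_mem_Icc.2 zero_le_one) (right_mem_Icc.2 zero_le_one) zero_le_one
  simp only [r] at this
  linarith

section InnerProductSpace

variable {E : Type*} [NormedAddCommGroup E] [InnerProductSpace ℝ E]

def bregman (w : E → ℝ) (w' : E → E) (x' x : E) : ℝ := w x - w x' - ⟪w' x', x - x'⟫

/-- The supremum `⨆` of a family that is not bounded above is `0`, so the lemmas below assume
`g` in the effective domain, `BddAbove (range fun u => ⟪u, g⟫ - f u)`. -/
noncomputable def fenchelConjugate (f : E → ℝ) (g : E) : ℝ := ⨆ u, ⟪u, g⟫ - f u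

/-- The paper's `D_f(g₀, g)`, with the subgradient `x₀ ∈ ∂J(g₀)` as an explicit argument. -/
def dualBregman (J : E → ℝ) (x₀ g₀ g : E) : ℝ := J g - J g₀ - ⟪x₀, g - g₀⟫

/-- The paper's gap function `Q_f`, for `J = J_f`. -/
def primalDualGap (h w : E → ℝ) (μ : ℝ) (J : E → ℝ) (zb z : E × E) : ℝ :=
  (h zb.1 + μ * w zb.1 + ⟪zb.1, z.2⟫ - J z.2) - (h z.1 + μ * w z.1 + ⟪z.1, zb.2⟫ - J zb.2)

theorem mul_inner_le_of_forall_inner_sub_le {a η τ L B S : ℝ} {u v : E}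
    (ha : 0 ≤ a) (hη : 0 ≤ η) (hτ : 0 ≤ τ) (hL : 0 ≤ L) (hcond : 2 * L * a ≤ η * τ)
    (hB : ‖u‖ ^ 2 / 4 ≤ B) (hS : ∀ d : E, ⟪d, v⟫ - L / 2 * ‖d‖ ^ 2 ≤ S) :
    a * ⟪u, v⟫ ≤ a * η * B + τ * S := by
  have hS₀ : 0 ≤ S := by simpa using hS 0
  have hB₀ : 0 ≤ B := le_trans (by positivity) hB
  rcases hτ.eq_or_lt with rfl | hτ
  · obtain rfl | rfl : L = 0 ∨ a = 0 := mul_eq_zero.1 (by nlinarith [mul_nonneg hL ha])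
    · -- with `L = 0`, `hS` bounds `⟪d, v⟫` for every `d`, which forces `⟪u, v⟫ ≤ 0`
      by_contra! hlt
      have hpos : 0 < ⟪u, v⟫ := by nlinarith [mul_nonneg (mul_nonneg ha hη) hB₀]
      have := hS (((S + 1) / ⟪u, v⟫) • u)
      rw [real_inner_smul_left, div_mul_cancel₀ _ hpos.ne'] at this
      linarith
    · simp
  · set c := a / τ
    have hac : a = c * τ := (div_mul_cancel₀ a hτ.ne').symm
    have hc : 0 ≤ c := by positivity
    have hLc : 2 * L * c ≤ η := le_of_mul_le_mul_right (by rw [mul_assoc _ c, ← hac]; linarith) hτ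
    have key := hS (c • u)
    rw [real_inner_smul_left, norm_smul, mul_pow, Real.norm_of_nonneg hc] at key
    rw [hac]
    nlinarith [mul_le_mul_of_nonneg_left key hτ.le,
      mul_le_mul_of_nonneg_right hLc (by positivity : 0 ≤ c * τ * ‖u‖ ^ 2),
      mul_le_mul_of_nonneg_left hB (by positivity : 0 ≤ c * τ * η)]

theorem convexOn_of_bregman_nonneg {X : Set E} {w : E → ℝ} {w' : E → E} (hX : Convex ℝ X)
    (h : ∀ u ∈ X, ∀ v ∈ X, 0 ≤ bregman w w' v u) : ConvexOn ℝ X w := by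
  refine ⟨hX, fun u hu v hv a b ha hb hab => ?_⟩
  set z := a • u + b • v
  have h₁ := mul_nonneg ha (h u hu z (hX hu hv ha hb hab))
  have h₂ := mul_nonneg hb (h v hv z (hX hu hv ha hb hab))
  have hz : a • (u - z) + b • (v - z) = 0 := by
    obtain rfl : b = 1 - a := by linarith
    module
  have hin : a * ⟪w' z, u - z⟫ + b * ⟪w' z, v - z⟫ = 0 := by
    rw [← real_inner_smul_right, ← real_inner_smul_right, ← inner_add_right, hz, inner_zero_right]
  unfold bregman at h₁ h₂
  rw [smul_eq_mul, smul_eq_mul]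
  have : w z = (a + b) * w z := by rw [hab, one_mul]
  nlinarith

theorem inner_sub_le_fenchelConjugate {f : E → ℝ} {g : E}
    (hg : BddAbove (range fun u => ⟪u, g⟫ - f u)) (u : E) :
    ⟪u, g⟫ - f u ≤ fenchelConjugate f g :=
  le_ciSup hg u

theorem convexOn_fenchelConjugate (f : E → ℝ) :
    ConvexOn ℝ {g | BddAbove (range fun u => ⟪u, g⟫ - f u)} (fenchelConjugate f) := by
  have hcomb : ∀ {a b : ℝ} (g₁ g₂ u : E), a + b = 1 →
      ⟪u, a • g₁ + b • g₂⟫ - f u = a * (⟪u, g₁⟫ - f u) + b * (⟪u, g₂⟫ - f u) := by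
    intro a b g₁ g₂ u hab
    rw [inner_add_right, real_inner_smul_right, real_inner_smul_right]
    linear_combination (f u) * hab
  refine ⟨fun g₁ ⟨B₁, hB₁⟩ g₂ ⟨B₂, hB₂⟩ a b ha hb hab => ⟨a * B₁ + b * B₂, ?_⟩,
    fun g₁ hg₁ g₂ hg₂ a b ha hb hab => ciSup_le fun u => ?_⟩
  · rintro _ ⟨u, rfl⟩
    dsimp only
    rw [hcomb g₁ g₂ u hab]
    gcongr
    exacts [hB₁ ⟨u, rfl⟩, hB₂ ⟨u, rfl⟩]
  · rw [hcomb g₁ g₂ u hab, smul_eq_mul, smul_eq_mul]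
    gcongr
    exacts [inner_sub_le_fenchelConjugate hg₁ u, inner_sub_le_fenchelConjugate hg₂ u]

theorem dualBregman_three_point (J : E → ℝ) {τ : ℝ} (hτ : 1 + τ ≠ 0) {x x₀ x₁ g₀ g₁ G : E}
    (hx₁ : x₁ = (1 + τ)⁻¹ • (x + τ • x₀)) :
    ⟪x, G - g₁⟫ + J g₁ - J G =
      τ * dualBregman J x₀ g₀ G - (1 + τ) * dualBregman J x₁ g₁ G
        - τ * dualBregman J x₀ g₀ g₁ := by
  have hx : x = (1 + τ) • x₁ - τ • x₀ := by rw [hx₁, smul_inv_smul₀ hτ]; abel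
  simp only [dualBregman, hx, inner_sub_left, inner_sub_right, real_inner_smul_left]
  ring

theorem ConvexOn.sum_mul_le_sum_mul_centerMass {ι : Type*} {s : Set E} {φ : E → ℝ}
    {t : Finset ι} {θ : ι → ℝ} {x : ι → E} (hφ : ConvexOn ℝ s φ) (hθ : ∀ i ∈ t, 0 ≤ θ i)
    (hx : ∀ i ∈ t, x i ∈ s) :
    (∑ i ∈ t, θ i) * φ (t.centerMass θ x) ≤ ∑ i ∈ t, θ i * φ (x i) := by
  rcases (Finset.sum_nonneg hθ).eq_or_lt with hzero | hpos
  · rw [← hzero, zero_mul]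
    exact Finset.sum_nonneg fun i hi => by
      rw [(Finset.sum_eq_zero_iff_of_nonneg hθ).1 hzero.symm i hi, zero_mul]
  · have := hφ.map_centerMass_le hθ hpos hx
    rwa [Finset.centerMass, Finset.centerMass, smul_eq_mul, le_inv_mul_iff₀ hpos] at this

theorem sum_mul_primalDualGap_centerMass_le {ι : Type*} {X : Set E} {f h w : E → ℝ} {μ : ℝ}
    (hh : ConvexOn ℝ X h) (hw : ConvexOn ℝ X w) (hμ : 0 ≤ μ)
    {t : Finset ι} {θ : ι → ℝ} {x g : ι → E} (hθ : ∀ i ∈ t, 0 ≤ θ i) (hx : ∀ i ∈ t, x i ∈ X)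
    (hg : ∀ i ∈ t, BddAbove (range fun u => ⟪u, g i⟫ - f u)) (z : E × E) :
    (∑ i ∈ t, θ i) *
        primalDualGap h w μ (fenchelConjugate f) (t.centerMass θ x, t.centerMass θ g) z
      ≤ ∑ i ∈ t, θ i * primalDualGap h w μ (fenchelConjugate f) (x i, g i) z := by
  have hprimal := ((hh.add (hw.smul hμ)).add
    ((innerSL ℝ z.2).toLinearMap.convexOn hh.1)).sum_mul_le_sum_mul_centerMass hθ hx
  have hdual := ((convexOn_fenchelConjugate f).add
    ((-innerSL ℝ z.1).toLinearMap.convexOn (convexOn_fenchelConjugate f).1)).sum_mul_le_sum_mul_centerMass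
      hθ hg
  simp only [primalDualGap, Pi.add_apply, smul_eq_mul, ContinuousLinearMap.coe_coe,
    innerSL_apply_apply, neg_apply, real_inner_comm z.2, mul_add, mul_neg, sub_eq_add_neg,
    Finset.sum_add_distrib, Finset.sum_neg_distrib, ← Finset.sum_mul] at hprimal hdual ⊢
  linarith

section Gradient

variable [CompleteSpace E]

theorem HasGradientAt.add {f g : E → ℝ} {f' g' x : E} (hf : HasGradientAt f f' x)
    (hg : HasGradientAt g g' x) : HasGradientAt (fun y => f y + g y) (f' + g') x := by
  rw [hasGradientAt_iff_hasFDerivAt, map_add]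
  exact HasFDerivAt.add hf hg

theorem HasGradientAt.const_mul {f : E → ℝ} {f' x : E} (c : ℝ) (hf : HasGradientAt f f' x) :
    HasGradientAt (fun y => c * f y) (c • f') x := by
  rw [hasGradientAt_iff_hasFDerivAt, map_smulₛₗ, RCLike.conj_to_real]
  exact HasFDerivAt.const_mul hf c

theorem hasGradientAt_inner_right (a x : E) : HasGradientAt (fun y => ⟪a, y⟫) a x :=
  (InnerProductSpace.toDual ℝ E a).hasFDerivAt

theorem HasGradientAt.hasDerivAt_comp_add_smul {f : E → ℝ} {g a d : E} {t : ℝ}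
    (hf : HasGradientAt f g (a + t • d)) :
    HasDerivAt (fun s : ℝ => f (a + s • d)) ⟪g, d⟫ t := by
  have hline : HasDerivAt (fun s : ℝ => a + s • d) d t := by
    simpa using ((hasDerivAt_id t).smul_const d).const_add a
  have := (hasGradientAt_iff_hasFDerivAt.mp hf).comp_hasDerivAt t hline
  rwa [InnerProductSpace.toDual_apply_apply] at this

theorem ConvexOn.add_inner_le_of_hasGradientAt {s : Set E} {f : E → ℝ} {g x y : E}
    (hf : ConvexOn ℝ s f) (hx : x ∈ s) (hy : y ∈ s) (hg : HasGradientAt f g x) :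
    f x + ⟪g, y - x⟫ ≤ f y := by
  let ℓ : ℝ →ᵃ[ℝ] E := AffineMap.lineMap x y
  have hφ : ConvexOn ℝ (ℓ ⁻¹' s) (f ∘ ℓ) := hf.comp_affineMap ℓ
  have hline : f ∘ ℓ = fun t : ℝ => f (x + t • (y - x)) := by
    funext t; simp [ℓ, AffineMap.lineMap_apply_module', add_comm]
  have hd : HasDerivAt (f ∘ ℓ) ⟪g, y - x⟫ 0 := by
    rw [hline]; exact HasGradientAt.hasDerivAt_comp_add_smul (by simpa using hg)
  have := hφ.le_slope_of_hasDerivAt (by simpa [ℓ]) (by simpa [ℓ]) one_pos hd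
  simp only [slope_def_field, Function.comp_apply, AffineMap.lineMap_apply_one,
    AffineMap.lineMap_apply_zero, sub_zero, div_one, ℓ] at this
  linarith

theorem le_add_inner_add_of_lipschitz_gradient {f : E → ℝ} {f' : E → E} {L : ℝ}
    (hf : ∀ u, HasGradientAt f (f' u) u) (hLip : ∀ u v, ‖f' u - f' v‖ ≤ L * ‖u - v‖)
    (x y : E) : f y ≤ f x + ⟪f' x, y - x⟫ + L / 2 * ‖y - x‖ ^ 2 := by
  set d := y - x
  have key := sub_le_add_half_of_hasDerivAt (φ := fun t => f (x + t • d))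
    (c := L * ‖d‖ ^ 2) (fun t => (hf _).hasDerivAt_comp_add_smul) fun t ht => by
      calc ⟪f' (x + t • d), d⟫ - ⟪f' (x + (0 : ℝ) • d), d⟫ = ⟪f' (x + t • d) - f' x, d⟫ := by
            simp [inner_sub_left]
        _ ≤ ‖f' (x + t • d) - f' x‖ * ‖d‖ := real_inner_le_norm _ _
        _ ≤ L * ‖t • d‖ * ‖d‖ := by gcongr; simpa using hLip (x + t • d) x
        _ = L * ‖d‖ ^ 2 * t := by rw [norm_smul, Real.norm_of_nonneg ht.1.le]; ring
  simp only [d, one_smul, add_sub_cancel, zero_smul, add_zero] at key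
  linarith

theorem sq_norm_div_four_le_bregman {X : Set E} {w : E → ℝ} {w' : E → E} (hX : Convex ℝ X)
    (hw : ∀ u, HasGradientAt w (w' u) u)
    (hw' : ∀ u ∈ X, ∀ v ∈ X, 1 / 2 * ‖u - v‖ ^ 2 ≤ ⟪w' u - w' v, u - v⟫)
    {u v : E} (hu : u ∈ X) (hv : v ∈ X) : ‖u - v‖ ^ 2 / 4 ≤ bregman w w' v u := by
  set d := u - v
  have key := sub_le_add_half_of_hasDerivAt (φ := fun t => -w (v + t • d))
    (c := -(‖d‖ ^ 2 / 2)) (fun t => ((hw _).hasDerivAt_comp_add_smul).neg) fun t ht => by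
      have hmono := hw' _ (hX.add_smul_sub_mem hv hu (Ioo_subset_Icc_self ht)) v hv
      rw [add_sub_cancel_left, inner_smul_right, norm_smul, mul_pow,
        Real.norm_of_nonneg ht.1.le, inner_sub_left] at hmono
      have : t * (t * ‖d‖ ^ 2 / 2) ≤ t * (⟪w' (v + t • d), d⟫ - ⟪w' v, d⟫) := by linarith
      have := le_of_mul_le_mul_left this ht.1
      rw [zero_smul, add_zero]
      linarith
  simp only [one_smul, add_sub_cancel, zero_smul, add_zero, sub_neg_eq_add, le_neg_add_iff_add_le,
    d] at key
  unfold bregman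
  linarith

theorem bregman_nonneg {X : Set E} {w : E → ℝ} {w' : E → E} (hX : Convex ℝ X)
    (hw : ∀ u, HasGradientAt w (w' u) u)
    (hw' : ∀ u ∈ X, ∀ v ∈ X, 1 / 2 * ‖u - v‖ ^ 2 ≤ ⟪w' u - w' v, u - v⟫)
    {u v : E} (hu : u ∈ X) (hv : v ∈ X) : 0 ≤ bregman w w' v u :=
  le_trans (by positivity) (sq_norm_div_four_le_bregman hX hw hw' hu hv)

theorem IsMinOn.inner_add_sub_nonneg {X : Set E} {F h : E → ℝ} {G q u : E}
    (hmin : IsMinOn (fun v => F v + h v) X q) (hX : Convex ℝ X) (hh : ConvexOn ℝ X h)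
    (hF : HasGradientAt F G q) (hq : q ∈ X) (hu : u ∈ X) : 0 ≤ ⟪G, u - q⟫ + (h u - h q) := by
  -- along the segment from `q` to `u`, `h` lies below its chord, so `φ` is minimal at `0`
  set φ : ℝ → ℝ := fun s => F (q + s • (u - q)) + s * (h u - h q)
  have hφ : HasDerivAt φ (⟪G, u - q⟫ + (h u - h q)) 0 := by
    have hline : HasDerivAt (fun s : ℝ => F (q + s • (u - q))) ⟪G, u - q⟫ 0 :=
      HasGradientAt.hasDerivAt_comp_add_smul (by simpa using hF)
    have := hline.add ((hasDerivAt_id' 0).mul_const (h u - h q))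
    rwa [one_mul] at this
  have hφmin : IsMinOn φ (Icc 0 1) 0 := by
    intro s hs
    have hseg : q + s • (u - q) = (1 - s) • q + s • u := by module
    have h₁ := hmin (hX.add_smul_sub_mem hq hu hs)
    have h₂ := hh.2 hq hu (sub_nonneg.2 hs.2) hs.1 (sub_add_cancel 1 s)
    rw [← hseg, smul_eq_mul, smul_eq_mul] at h₂
    simp only [mem_ofPred_eq, φ, zero_smul, add_zero, zero_mul] at h₁ ⊢
    nlinarith
  have := hφmin.localize.hasFDerivWithinAt_nonneg hφ.hasFDerivAt.hasFDerivWithinAt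
    (y := 1) (mem_posTangentConeAt_of_segment_subset (by simp [segment_eq_Icc]))
  simpa using this

theorem bregman_prox_three_point {X : Set E} {h w : E → ℝ} {w' : E → E} {μ η : ℝ}
    {γ p q u : E} (hX : Convex ℝ X) (hh : ConvexOn ℝ X h) (hw : ∀ u, HasGradientAt w (w' u) u)
    (hq : q ∈ X) (hu : u ∈ X)
    (hmin : ∀ v ∈ X, ⟪γ, q⟫ + h q + μ * w q + η * bregman w w' p q ≤
      ⟪γ, v⟫ + h v + μ * w v + η * bregman w w' p v) :
    ⟪γ, q - u⟫ + (h q - h u) + μ * (w q - w u) ≤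
      η * (bregman w w' p u - bregman w w' p q) - (μ + η) * bregman w w' q u := by
  have hF : HasGradientAt (fun v => ⟪γ - η • w' p, v⟫ + (μ + η) * w v)
      (γ - η • w' p + (μ + η) • w' q) q :=
    (hasGradientAt_inner_right _ q).add ((hw q).const_mul _)
  have hmin' : IsMinOn (fun v => (⟪γ - η • w' p, v⟫ + (μ + η) * w v) + h v) X q := by
    intro v hv
    have := hmin v hv
    simp only [bregman, inner_sub_right] at this
    simp only [mem_ofPred_eq, inner_sub_left, real_inner_smul_left]
    linarith
  have := hmin'.inner_add_sub_nonneg hX hh hF hq hu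
  simp only [bregman, inner_sub_left, inner_sub_right, inner_add_left,
    real_inner_smul_left] at this ⊢
  linarith

theorem inner_sub_le_of_hasGradientAt {f : E → ℝ} {g y : E} (hf : ConvexOn ℝ univ f)
    (hg : HasGradientAt f g y) (u : E) : ⟪u, g⟫ - f u ≤ ⟪y, g⟫ - f y := by
  have := hf.add_inner_le_of_hasGradientAt (mem_univ y) (mem_univ u) hg
  rw [inner_sub_right, real_inner_comm u g, real_inner_comm y g] at this
  linarith

theorem bddAbove_of_hasGradientAt {f : E → ℝ} {g y : E} (hf : ConvexOn ℝ univ f)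
    (hg : HasGradientAt f g y) : BddAbove (range fun u => ⟪u, g⟫ - f u) :=
  ⟨_, forall_mem_range.2 (inner_sub_le_of_hasGradientAt hf hg)⟩

theorem fenchelConjugate_of_hasGradientAt {f : E → ℝ} {g y : E} (hf : ConvexOn ℝ univ f)
    (hg : HasGradientAt f g y) : fenchelConjugate f g = ⟪y, g⟫ - f y :=
  le_antisymm (ciSup_le (inner_sub_le_of_hasGradientAt hf hg))
    (inner_sub_le_fenchelConjugate (bddAbove_of_hasGradientAt hf hg) y)

theorem dualBregman_nonneg {f : E → ℝ} {g y G : E} (hf : ConvexOn ℝ univ f)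
    (hg : HasGradientAt f g y) (hG : BddAbove (range fun u => ⟪u, G⟫ - f u)) :
    0 ≤ dualBregman (fenchelConjugate f) y g G := by
  have := inner_sub_le_fenchelConjugate hG y
  rw [dualBregman, fenchelConjugate_of_hasGradientAt hf hg, inner_sub_right]
  linarith

theorem inner_sub_half_sq_le_dualBregman {f : E → ℝ} {f' : E → E} {L : ℝ} {G : E}
    (hf : ConvexOn ℝ univ f) (hf' : ∀ u, HasGradientAt f (f' u) u)
    (hLip : ∀ u v, ‖f' u - f' v‖ ≤ L * ‖u - v‖) (hG : BddAbove (range fun u => ⟪u, G⟫ - f u))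
    (y d : E) : ⟪d, G - f' y⟫ - L / 2 * ‖d‖ ^ 2 ≤ dualBregman (fenchelConjugate f) y (f' y) G := by
  have h₁ := inner_sub_le_fenchelConjugate hG (y + d)
  have h₂ := le_add_inner_add_of_lipschitz_gradient hf' hLip y (y + d)
  rw [add_sub_cancel_left] at h₂
  rw [dualBregman, fenchelConjugate_of_hasGradientAt hf (hf' y)]
  simp only [inner_add_left, inner_sub_right, real_inner_comm (f' y) d] at h₁ h₂ ⊢
  linarith

theorem mul_inner_sub_le_bregman_add_dualBregman {X : Set E} {f w : E → ℝ} {f' w' : E → E}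
    {L a η τ : ℝ} (hX : Convex ℝ X) (hw : ∀ u, HasGradientAt w (w' u) u)
    (hw' : ∀ u ∈ X, ∀ v ∈ X, 1 / 2 * ‖u - v‖ ^ 2 ≤ ⟪w' u - w' v, u - v⟫)
    (hf : ConvexOn ℝ univ f) (hf' : ∀ u, HasGradientAt f (f' u) u)
    (hLip : ∀ u v, ‖f' u - f' v‖ ≤ L * ‖u - v‖) (hL : 0 ≤ L) (ha : 0 ≤ a) (hη : 0 ≤ η)
    (hτ : 0 ≤ τ) (hcond : 2 * L * a ≤ η * τ) {x₀ x₁ y G : E} (hx₀ : x₀ ∈ X) (hx₁ : x₁ ∈ X)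
    (hG : BddAbove (range fun u => ⟪u, G⟫ - f u)) :
    a * ⟪x₁ - x₀, G - f' y⟫ ≤
      a * η * bregman w w' x₀ x₁ + τ * dualBregman (fenchelConjugate f) y (f' y) G :=
  mul_inner_le_of_forall_inner_sub_le ha hη hτ hL hcond
    (sq_norm_div_four_le_bregman hX hw hw' hx₁ hx₀)
    (inner_sub_half_sq_le_dualBregman hf hf' hLip hG y)

theorem primalDualGap_le_of_pdg_step {X : Set E} {h w : E → ℝ} {w' : E → E}
    {μ α τ η η₀ : ℝ} (J : E → ℝ)
    (hX : Convex ℝ X) (hh : ConvexOn ℝ X h) (hw : ∀ u, HasGradientAt w (w' u) u) (hτ : 0 ≤ τ)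
    {x₀ x₁ x₂ xt y₁ y₂ g₁ g₂ x g : E} (hx₂ : x₂ ∈ X) (hx : x ∈ X)
    (hxt : xt = α • (x₁ - x₀) + x₁) (hy₂ : y₂ = (1 + τ)⁻¹ • (xt + τ • y₁))
    (hmin : ∀ v ∈ X, ⟪g₂, x₂⟫ + h x₂ + μ * w x₂ + η * bregman w w' x₁ x₂ ≤
      ⟪g₂, v⟫ + h v + μ * w v + η * bregman w w' x₁ v)
    (hcross : α * ⟪x₁ - x₀, g₂ - g₁⟫ ≤
      α * η₀ * bregman w w' x₀ x₁ + τ * dualBregman J y₁ g₁ g₂) :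
    primalDualGap h w μ J (x₂, g₂) (x, g) ≤
      η * bregman w w' x₁ x - (μ + η) * bregman w w' x₂ x
        + τ * dualBregman J y₁ g₁ g - (1 + τ) * dualBregman J y₂ g₂ g
        + (⟪x₂ - x₁, g - g₂⟫ - η * bregman w w' x₁ x₂)
        - α * (⟪x₁ - x₀, g - g₁⟫ - η₀ * bregman w w' x₀ x₁) := by
  have hprimal := bregman_prox_three_point hX hh hw hx₂ hx hmin
  have hdual := dualBregman_three_point J (by positivity) (G := g) (g₀ := g₁) (g₁ := g₂) hy₂
  rw [hxt] at hdual
  simp only [primalDualGap, inner_sub_left, inner_sub_right, inner_add_left,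
    real_inner_smul_left, real_inner_comm x₂ g₂, real_inner_comm x g₂] at hprimal hdual hcross ⊢
  linarith

theorem primalDualGap_le_of_pdg_iterates {X : Set E} {f h w : E → ℝ} {f' w' : E → E}
    {μ L : ℝ} {k : ℕ} {τ η α : ℕ → ℝ} {x xt xu g : ℕ → E}
    (hX : Convex ℝ X) (hh : ConvexOn ℝ X h) (hw : ∀ u, HasGradientAt w (w' u) u)
    (hw' : ∀ u ∈ X, ∀ v ∈ X, 1 / 2 * ‖u - v‖ ^ 2 ≤ ⟪w' u - w' v, u - v⟫)
    (hf : ConvexOn ℝ univ f) (hf' : ∀ u, HasGradientAt f (f' u) u)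
    (hLip : ∀ u v, ‖f' u - f' v‖ ≤ L * ‖u - v‖) (hL : 0 ≤ L)
    (hτ : ∀ t, 1 ≤ t → t ≤ k → 0 ≤ τ t) (hη : ∀ t, 1 ≤ t → t ≤ k → 0 < η t)
    (hα : ∀ t, 1 ≤ t → t ≤ k → 0 ≤ α t)
    (hcond : ∀ t, 2 ≤ t → t ≤ k → 2 * L * α t ≤ η (t - 1) * τ t)
    (hxX : ∀ t ≤ k, x t ∈ X) (hg : ∀ t ≤ k, g t = f' (xu t))
    (hxt : ∀ t, 1 ≤ t → t ≤ k → xt t = α t • (x (t - 1) - x (t - 2)) + x (t - 1))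
    (hxu : ∀ t, 1 ≤ t → t ≤ k → xu t = (1 + τ t)⁻¹ • (xt t + τ t • xu (t - 1)))
    (hxmin : ∀ t, 1 ≤ t → t ≤ k → ∀ u ∈ X,
      ⟪g t, x t⟫ + h (x t) + μ * w (x t) + η t * bregman w w' (x (t - 1)) (x t) ≤
        ⟪g t, u⟫ + h u + μ * w u + η t * bregman w w' (x (t - 1)) u)
    {x' g' : E} (hx' : x' ∈ X) {t : ℕ} (ht : 1 ≤ t) (htk : t ≤ k) :
    primalDualGap h w μ (fenchelConjugate f) (x t, g t) (x', g') ≤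
      η t * bregman w w' (x (t - 1)) x' - (μ + η t) * bregman w w' (x t) x'
        + τ t * dualBregman (fenchelConjugate f) (xu (t - 1)) (g (t - 1)) g'
        - (1 + τ t) * dualBregman (fenchelConjugate f) (xu t) (g t) g'
        + (⟪x t - x (t - 1), g' - g t⟫ - η t * bregman w w' (x (t - 1)) (x t))
        - α t * (⟪x (t - 1) - x (t - 2), g' - g (t - 1)⟫
          - η (t - 1) * bregman w w' (x (t - 2)) (x (t - 1))) := by
  refine primalDualGap_le_of_pdg_step _ hX hh hw (hτ t ht htk) (hxX t htk) hx'
    (hxt t ht htk) (hxu t ht htk) (hxmin t ht htk) ?_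
  rcases ht.eq_or_lt with rfl | ht
  · -- `1 - 2 = 1 - 1 = 0` in `ℕ`: this is the convention `x^{-1} = x^0`
    simpa [bregman] using mul_nonneg (hτ 1 le_rfl htk)
      (dualBregman_nonneg hf (hg 0 (by omega) ▸ hf' _) (hg 1 htk ▸ bddAbove_of_hasGradientAt hf (hf' _)))
  · rw [hg (t - 1) (by omega)]
    exact mul_inner_sub_le_bregman_add_dualBregman hX hw hw' hf hf' hLip hL
      (hα t (by omega) htk) (hη (t - 1) (by omega) (by omega)).le (hτ t (by omega) htk)
      (hcond t ht htk) (hxX _ (by omega)) (hxX _ (by omega))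
      (hg t htk ▸ bddAbove_of_hasGradientAt hf (hf' _))

end Gradient

end InnerProductSpace

theorem sum_mul_le_of_pdg_recursion {k : ℕ} (hk : 1 ≤ k) {μ : ℝ} {θ τ η α q p d r : ℕ → ℝ}
    (hθ : ∀ t, 1 ≤ t → t ≤ k → 0 ≤ θ t) (hp : ∀ t, t ≤ k → 0 ≤ p t)
    (hd : ∀ t, t ≤ k → 0 ≤ d t)
    (hτ : ∀ t, 2 ≤ t → t ≤ k → θ t * τ t ≤ θ (t - 1) * (1 + τ (t - 1)))
    (hη : ∀ t, 2 ≤ t → t ≤ k → θ t * η t ≤ θ (t - 1) * (μ + η (t - 1)))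
    (hα : ∀ t, 2 ≤ t → t ≤ k → α t * θ t = θ (t - 1)) (hr : r 0 = 0)
    (hstep : ∀ t, 1 ≤ t → t ≤ k → q t ≤ η t * p (t - 1) - (μ + η t) * p t
        + τ t * d (t - 1) - (1 + τ t) * d t + r t - α t * r (t - 1))
    (hlast : r k ≤ (1 + τ k) * d k) :
    ∑ t ∈ Finset.Icc 1 k, θ t * q t + θ k * (μ + η k) * p k ≤
      θ 1 * η 1 * p 0 + θ 1 * τ 1 * d 0 := by
  have partial_sum : ∀ m, 1 ≤ m → m ≤ k → ∑ t ∈ Finset.Icc 1 m, θ t * q t ≤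
      θ 1 * η 1 * p 0 + θ 1 * τ 1 * d 0
        - θ m * (μ + η m) * p m - θ m * (1 + τ m) * d m + θ m * r m := by
    intro m hm
    induction m, hm using Nat.le_induction with
    | base =>
      intro h1k
      have := mul_le_mul_of_nonneg_left (hstep 1 le_rfl h1k) (hθ 1 le_rfl h1k)
      simp only [Finset.Icc_self, Finset.sum_singleton, Nat.sub_self, hr, mul_zero,
        sub_zero] at this ⊢
      linarith
    | succ m hm ih =>
      intro hmk
      have hstep' := mul_le_mul_of_nonneg_left (hstep (m + 1) (by omega) hmk) (hθ _ (by omega) hmk)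
      have hp' := mul_le_mul_of_nonneg_right (hη (m + 1) (by omega) hmk) (hp m (by omega))
      have hd' := mul_le_mul_of_nonneg_right (hτ (m + 1) (by omega) hmk) (hd m (by omega))
      have hα' := hα (m + 1) (by omega) hmk
      simp only [Nat.add_sub_cancel] at hstep' hp' hd' hα'
      have hr' : θ (m + 1) * (α (m + 1) * r m) = θ m * r m := by rw [← hα']; ring
      rw [Finset.sum_Icc_succ_top (by omega)]
      linarith [ih (by omega)]
  have := partial_sum k hk le_rfl
  have := mul_le_mul_of_nonneg_left hlast (hθ k hk le_rfl)
  linarith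

theorem pdg_master_inequality_general
    {n : ℕ} (X : Set (EuclideanSpace ℝ (Fin n)))
    (hXconvex : Convex ℝ X)
    (f h w : EuclideanSpace ℝ (Fin n) → ℝ)
    (f' w' : EuclideanSpace ℝ (Fin n) → EuclideanSpace ℝ (Fin n))
    (μ Lf : ℝ) (hμ : 0 ≤ μ) (hLf : 0 ≤ Lf)
    (hfconv : ConvexOn ℝ Set.univ f)
    (hfdiff : ∀ u, HasGradientAt f (f' u) u)
    (hfLip : ∀ u v, ‖f' u - f' v‖ ≤ Lf * ‖u - v‖)
    (hhconv : ConvexOn ℝ X h)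
    (hwdiff : ∀ u, HasGradientAt w (w' u) u)
    (hwstrong : ∀ u ∈ X, ∀ v ∈ X, (1 / 2) * ‖u - v‖ ^ 2 ≤ ⟪w' u - w' v, u - v⟫)
    (P : EuclideanSpace ℝ (Fin n) → EuclideanSpace ℝ (Fin n) → ℝ)
    (hP : ∀ x' xx, P x' xx = w xx - w x' - ⟪w' x', xx - x'⟫)
    (J : EuclideanSpace ℝ (Fin n) → ℝ)
    (hJ : ∀ g, J g = ⨆ u, (⟪u, g⟫ - f u))
    (Q : (EuclideanSpace ℝ (Fin n) × EuclideanSpace ℝ (Fin n)) →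
         (EuclideanSpace ℝ (Fin n) × EuclideanSpace ℝ (Fin n)) → ℝ)
    (hQ : ∀ zb z, Q zb z =
      (h zb.1 + μ * w zb.1 + ⟪zb.1, z.2⟫ - J z.2)
      - (h z.1 + μ * w z.1 + ⟪z.1, zb.2⟫ - J zb.2))
    (k : ℕ) (hk : 1 ≤ k)
    (τ η α θ : ℕ → ℝ)
    (hτnn : ∀ t, 1 ≤ t → t ≤ k → 0 ≤ τ t)
    (hηpos : ∀ t, 1 ≤ t → t ≤ k → 0 < η t)
    (hαnn : ∀ t, 1 ≤ t → t ≤ k → 0 ≤ α t)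
    (hθnn : ∀ t, 1 ≤ t → t ≤ k → 0 ≤ θ t)
    (hcond1 : ∀ t, 2 ≤ t → t ≤ k → θ t * τ t ≤ θ (t - 1) * (1 + τ (t - 1)))
    (hcond2 : ∀ t, 2 ≤ t → t ≤ k → θ t * η t ≤ θ (t - 1) * (μ + η (t - 1)))
    (hcond3 : ∀ t, 2 ≤ t → t ≤ k → 2 * Lf * α t ≤ η (t - 1) * τ t)
    (hcond4 : 2 * Lf ≤ η k * (1 + τ k))
    (hcond5 : ∀ t, 2 ≤ t → t ≤ k → α t * θ t = θ (t - 1))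
    (x xt xu g : ℕ → EuclideanSpace ℝ (Fin n))
    (hx0 : x 0 ∈ X)
    (hxu0 : xu 0 = x 0)
    (hg0 : g 0 = f' (x 0))
    (hxt : ∀ t, 1 ≤ t → t ≤ k → xt t = α t • (x (t - 1) - x (t - 2)) + x (t - 1))
    (hxu : ∀ t, 1 ≤ t → t ≤ k → xu t = (1 + τ t)⁻¹ • (xt t + τ t • xu (t - 1)))
    (hg : ∀ t, 1 ≤ t → t ≤ k → g t = f' (xu t))
    (hxmem : ∀ t, 1 ≤ t → t ≤ k → x t ∈ X)
    (hxmin : ∀ t, 1 ≤ t → t ≤ k → ∀ u ∈ X,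
      ⟪g t, x t⟫ + h (x t) + μ * w (x t) + η t * P (x (t - 1)) (x t) ≤
        ⟪g t, u⟫ + h u + μ * w u + η t * P (x (t - 1)) u)
    (xbar gbar : EuclideanSpace ℝ (Fin n))
    (hxbar : xbar = (∑ t ∈ Finset.Icc 1 k, θ t)⁻¹ • ∑ t ∈ Finset.Icc 1 k, θ t • x t)
    (hgbar : gbar = (∑ t ∈ Finset.Icc 1 k, θ t)⁻¹ • ∑ t ∈ Finset.Icc 1 k, θ t • g t)
    (xx : EuclideanSpace ℝ (Fin n)) (hxx : xx ∈ X)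
    (gg : EuclideanSpace ℝ (Fin n))
    (hgg : BddAbove (Set.range fun u => ⟪u, gg⟫ - f u)) :
    (∑ t ∈ Finset.Icc 1 k, θ t) * Q (xbar, gbar) (xx, gg)
        + θ k * (μ + η k) * P (x k) xx
      ≤ θ 1 * η 1 * P (x 0) xx
        + θ 1 * τ 1 * (J gg - J (g 0) - ⟪x 0, gg - g 0⟫) := by
  obtain rfl : P = bregman w w' := funext₂ hP
  obtain rfl : J = fenchelConjugate f := funext hJ
  obtain rfl : Q = primalDualGap h w μ (fenchelConjugate f) := funext₂ hQ
  subst hxbar hgbar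
  have hxX : ∀ t ≤ k, x t ∈ X := fun t ht =>
    t.eq_zero_or_pos.elim (fun h0 => h0 ▸ hx0) (hxmem t · ht)
  have hgf : ∀ t ≤ k, g t = f' (xu t) := fun t ht =>
    t.eq_zero_or_pos.elim (fun h0 => h0 ▸ hxu0 ▸ hg0) (hg t · ht)
  have hlast : ⟪x k - x (k - 1), gg - g k⟫ - η k * bregman w w' (x (k - 1)) (x k) ≤
      (1 + τ k) * dualBregman (fenchelConjugate f) (xu k) (g k) gg := by
    have := mul_inner_sub_le_bregman_add_dualBregman hXconvex hwdiff hwstrong hfconv hfdiff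
      hfLip hLf zero_le_one (hηpos k hk le_rfl).le (by linarith [hτnn k hk le_rfl])
      (by linarith) (hxX (k - 1) (by omega)) (hxX k le_rfl) hgg (τ := 1 + τ k) (y := xu k)
    rw [hgf k le_rfl]
    linarith
  have htelescope := sum_mul_le_of_pdg_recursion hk hθnn
    (q := fun t => primalDualGap h w μ (fenchelConjugate f) (x t, g t) (xx, gg))
    (r := fun t => ⟪x t - x (t - 1), gg - g t⟫ - η t * bregman w w' (x (t - 1)) (x t))
    (fun t ht => bregman_nonneg hXconvex hwdiff hwstrong hxx (hxX t ht))
    (fun t ht => dualBregman_nonneg hfconv (hgf t ht ▸ hfdiff _) hgg)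
    hcond1 hcond2 hcond5 (by simp [bregman]) (fun t ht htk => by
      simp only [Nat.sub_sub, Nat.reduceAdd]
      exact primalDualGap_le_of_pdg_iterates hXconvex hhconv hwdiff hwstrong hfconv hfdiff hfLip
        hLf hτnn hηpos hαnn hcond3 hxX hgf hxt hxu hxmin hxx ht htk) hlast
  have hjensen := sum_mul_primalDualGap_centerMass_le hhconv
    (convexOn_of_bregman_nonneg hXconvex fun u hu v hv =>
      bregman_nonneg hXconvex hwdiff hwstrong hu hv)
    hμ (fun t ht => hθnn t (Finset.mem_Icc.1 ht).1 (Finset.mem_Icc.1 ht).2)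
    (fun t ht => hxX t (Finset.mem_Icc.1 ht).2)
    (fun t ht => hgf t (Finset.mem_Icc.1 ht).2 ▸ bddAbove_of_hasGradientAt hfconv (hfdiff _))
    (xx, gg)
  rw [dualBregman, hxu0] at htelescope
  exact (add_le_add hjensen le_rfl).trans htelescope

/-- Proposition 5.7 (master inequality for the deterministic PDG method):
under conditions (5.21)–(5.25) on the parameters `τ_t, η_t, α_t` and the
weights `θ_t`, for every `x ∈ X` and every `g` in the domain of `J_f`,
`(Σ_t θ_t) Q_f(z̄^k, (x,g)) + θ_k(μ + η_k) P(x^k, x)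
  ≤ θ_1 η_1 P(x^0, x) + θ_1 τ_1 D_f(g^0, g)`. -/
theorem pdg_master_inequality
    {n : ℕ} (X : Set (EuclideanSpace ℝ (Fin n)))
    (hXne : X.Nonempty) (hXclosed : IsClosed X) (hXconvex : Convex ℝ X)
    (f h w : EuclideanSpace ℝ (Fin n) → ℝ)
    (f' w' : EuclideanSpace ℝ (Fin n) → EuclideanSpace ℝ (Fin n))
    (μ Lf : ℝ) (hμ : 0 ≤ μ) (hLf : 0 ≤ Lf)
    (hfconv : ConvexOn ℝ Set.univ f)
    (hfdiff : ∀ u, HasGradientAt f (f' u) u)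
    (hfLip : ∀ u v, ‖f' u - f' v‖ ≤ Lf * ‖u - v‖)
    (hhconv : ConvexOn ℝ X h)
    (hwdiff : ∀ u, HasGradientAt w (w' u) u)
    (hwstrong : ∀ u ∈ X, ∀ v ∈ X, (1 / 2) * ‖u - v‖ ^ 2 ≤ ⟪w' u - w' v, u - v⟫)
    (P : EuclideanSpace ℝ (Fin n) → EuclideanSpace ℝ (Fin n) → ℝ)
    (hP : ∀ x' xx, P x' xx = w xx - w x' - ⟪w' x', xx - x'⟫)
    (J : EuclideanSpace ℝ (Fin n) → ℝ)
    (hJ : ∀ g, J g = ⨆ u, (⟪u, g⟫ - f u))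
    (Q : (EuclideanSpace ℝ (Fin n) × EuclideanSpace ℝ (Fin n)) →
         (EuclideanSpace ℝ (Fin n) × EuclideanSpace ℝ (Fin n)) → ℝ)
    (hQ : ∀ zb z, Q zb z =
      (h zb.1 + μ * w zb.1 + ⟪zb.1, z.2⟫ - J z.2)
      - (h z.1 + μ * w z.1 + ⟪z.1, zb.2⟫ - J zb.2))
    (k : ℕ) (hk : 1 ≤ k)
    (τ η α θ : ℕ → ℝ)
    (hτnn : ∀ t, 1 ≤ t → t ≤ k → 0 ≤ τ t)
    (hηpos : ∀ t, 1 ≤ t → t ≤ k → 0 < η t)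
    (hαnn : ∀ t, 1 ≤ t → t ≤ k → 0 ≤ α t)
    (hθnn : ∀ t, 1 ≤ t → t ≤ k → 0 ≤ θ t)
    (hcond1 : ∀ t, 2 ≤ t → t ≤ k → θ t * τ t ≤ θ (t - 1) * (1 + τ (t - 1)))
    (hcond2 : ∀ t, 2 ≤ t → t ≤ k → θ t * η t ≤ θ (t - 1) * (μ + η (t - 1)))
    (hcond3 : ∀ t, 2 ≤ t → t ≤ k → 2 * Lf * α t ≤ η (t - 1) * τ t)
    (hcond4 : 2 * Lf ≤ η k * (1 + τ k))
    (hcond5 : ∀ t, 2 ≤ t → t ≤ k → α t * θ t = θ (t - 1))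
    (x xt xu g : ℕ → EuclideanSpace ℝ (Fin n))
    (hx0 : x 0 ∈ X)
    (hxu0 : xu 0 = x 0)
    (hg0 : g 0 = f' (x 0))
    (hxt : ∀ t, 1 ≤ t → t ≤ k → xt t = α t • (x (t - 1) - x (t - 2)) + x (t - 1))
    (hxu : ∀ t, 1 ≤ t → t ≤ k → xu t = (1 + τ t)⁻¹ • (xt t + τ t • xu (t - 1)))
    (hg : ∀ t, 1 ≤ t → t ≤ k → g t = f' (xu t))
    (hxmem : ∀ t, 1 ≤ t → t ≤ k → x t ∈ X)
    (hxmin : ∀ t, 1 ≤ t → t ≤ k → ∀ u ∈ X,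
      ⟪g t, x t⟫ + h (x t) + μ * w (x t) + η t * P (x (t - 1)) (x t) ≤
        ⟪g t, u⟫ + h u + μ * w u + η t * P (x (t - 1)) u)
    (xbar gbar : EuclideanSpace ℝ (Fin n))
    (hxbar : xbar = (∑ t ∈ Finset.Icc 1 k, θ t)⁻¹ • ∑ t ∈ Finset.Icc 1 k, θ t • x t)
    (hgbar : gbar = (∑ t ∈ Finset.Icc 1 k, θ t)⁻¹ • ∑ t ∈ Finset.Icc 1 k, θ t • g t)
    (xx : EuclideanSpace ℝ (Fin n)) (hxx : xx ∈ X)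
    (gg : EuclideanSpace ℝ (Fin n))
    (hgg : BddAbove (Set.range fun u => ⟪u, gg⟫ - f u)) :
    (∑ t ∈ Finset.Icc 1 k, θ t) * Q (xbar, gbar) (xx, gg)
        + θ k * (μ + η k) * P (x k) xx
      ≤ θ 1 * η 1 * P (x 0) xx
        + θ 1 * τ 1 * (J gg - J (g 0) - ⟪x 0, gg - g 0⟫) :=
  pdg_master_inequality_general X hXconvex f h w f' w' μ Lf hμ hLf hfconv hfdiff hfLip hhconv hwdiff
    hwstrong P hP J hJ Q hQ k hk τ η α θ hτnn hηpos hαnn hθnn hcond1 hcond2 hcond3 hcond4 hcond5 x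
    xt xu g hx0 hxu0 hg0 hxt hxu hg hxmem hxmin xbar gbar hxbar hgbar xx hxx gg hgg
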